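/- arXiv:2109.01343 — 3 statements merged into one kernel-verified Lean document; each statement's English description precedes it below -/
import Mathlib

section
/- Let h : ℝ → ℝ be differentiable and let α : ℝ → ℝ be locally Lipschitz with α(0) = 0 and y·α(y) > 0 for y ≠ 0 (i.e., α is of extended class K). Suppose h'(t) ≥ -α(h(t)) for all t ≥ t₀ and h(t₀) ≥ 0. Then h(t) ≥ 0 for all t ≥ t₀. -/
/-- Scalar CBF safety theorem with a locally Lipschitz extended class-K
function `α`: forward invariance of `{h ≥ 0}`. -/
theorem stmt_9 (h : ℝ → ℝ) (hd : Differentiable ℝ h) (α : ℝ → ℝ)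
    (hα : LocallyLipschitz α) (hα0 : α 0 = 0)
    (hsign : ∀ y : ℝ, y ≠ 0 → 0 < y * α y)
    (t₀ : ℝ) (hder : ∀ t ≥ t₀, deriv h t ≥ -α (h t)) (h0 : h t₀ ≥ 0) :
    ∀ t ≥ t₀, 0 ≤ h t := by
  intro t ht
  by_contra hneg
  push_neg at hneg
  have ht0 : t₀ < t := by
    rcases eq_or_lt_of_le ht with rfl | h' <;> [linarith; exact h']
  set S : Set ℝ := {x | x ∈ Set.Icc t₀ t ∧ 0 ≤ h x} with hS
  have hSne : S.Nonempty := ⟨t₀, ⟨le_refl _, le_of_lt ht0⟩, h0⟩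
  have hSbdd : BddAbove S := ⟨t, fun x hx => hx.1.2⟩
  have hsclosed : IsClosed S := by
    have : S = Set.Icc t₀ t ∩ h ⁻¹' Set.Ici 0 := by
      ext x; simp only [hS, Set.mem_setOf_eq, Set.mem_inter_iff, Set.mem_preimage, Set.mem_Ici]
    rw [this]
    exact isClosed_Icc.inter (isClosed_Ici.preimage hd.continuous)
  set s := sSup S with hs
  have hsmem : s ∈ S := hsclosed.csSup_mem hSne hSbdd
  have hst : s < t := lt_of_le_of_ne hsmem.1.2 (fun he => absurd hsmem.2 (by rw [he]; exact not_le.mpr hneg))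
  have hneg' : ∀ x ∈ Set.Ioc s t, h x < 0 := by
    intro x hx
    by_contra hxpos
    push_neg at hxpos
    have : x ∈ S := ⟨⟨le_trans hsmem.1.1 hx.1.le, hx.2⟩, hxpos⟩
    exact absurd (le_csSup hSbdd this) (not_le.mpr hx.1)
  have hmono : StrictMonoOn h (Set.Icc s t) := by
    apply strictMonoOn_of_deriv_pos (convex_Icc s t) (hd.continuous.continuousOn)
    intro x hx
    rw [interior_Icc] at hx
    have hhx : h x < 0 := hneg' x ⟨hx.1, hx.2.le⟩
    have hα' : α (h x) < 0 := by
      have := hsign (h x) (ne_of_lt hhx)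
      nlinarith
    have : deriv h x ≥ -α (h x) := hder x (le_trans hsmem.1.1 hx.1.le)
    linarith
  have := hmono (Set.left_mem_Icc.mpr hst.le) (Set.right_mem_Icc.mpr hst.le) hst
  linarith [hsmem.2]
end

section
/- Let x : [t₀, ∞) → ℝⁿ be a C¹ trajectory of ẋ = f(x) + g(x)u(x) where u is a feedback law, let h : ℝⁿ → ℝ be C¹, and suppose u(x(t)) ∈ K_cbf(x(t)) = {u : ∇h(x)ᵀ(f(x) + g(x)u) ≥ -(1/k)h(x)} for all t with some fixed k > 0. If h(x(t₀)) ≥ 0 then h(x(t)) ≥ 0 for all t ≥ t₀. -/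
open Real Set

/-- The integrating factor `exp (c t)` makes `exp (c t) * y t` monotone. -/
theorem mul_exp_le_of_hasDerivAt_ge {y y' : ℝ → ℝ} {c t₀ : ℝ}
    (hy : ∀ t ≥ t₀, HasDerivAt y (y' t) t) (hy' : ∀ t ≥ t₀, -c * y t ≤ y' t) :
    ∀ t ≥ t₀, y t₀ * exp (-c * (t - t₀)) ≤ y t := by
  intro t ht
  have hz : ∀ s ≥ t₀, HasDerivAt (fun s => exp (c * s) * y s)
      (exp (c * s) * (c * y s + y' s)) s := fun s hs =>
    (((hasDerivAt_id' s).const_mul c).exp.mul (hy s hs)).congr_deriv (by ring)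
  have hmono : MonotoneOn (fun s => exp (c * s) * y s) (Ici t₀) := by
    refine monotoneOn_of_hasDerivWithinAt_nonneg (convex_Ici t₀)
      (fun s hs => (hz s hs).continuousAt.continuousWithinAt)
      (fun s hs => (hz s (interior_subset hs)).hasDerivWithinAt) fun s hs => ?_
    have := hy' s (interior_subset hs)
    have := exp_pos (c * s)
    nlinarith
  have hle : exp (c * t₀) * y t₀ ≤ exp (c * t) * y t :=
    hmono self_mem_Ici ht ht
  calc y t₀ * exp (-c * (t - t₀))
      = exp (-(c * t)) * (exp (c * t₀) * y t₀) := by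
        rw [show -c * (t - t₀) = -(c * t) + c * t₀ by ring, exp_add]; ring
    _ ≤ exp (-(c * t)) * (exp (c * t) * y t) := by gcongr
    _ = y t := by rw [← mul_assoc, ← exp_add, neg_add_cancel, exp_zero, one_mul]

theorem stmt_11_general {n m : ℕ}
    (f : EuclideanSpace ℝ (Fin n) → EuclideanSpace ℝ (Fin n))
    (g : EuclideanSpace ℝ (Fin n) → EuclideanSpace ℝ (Fin m) →L[ℝ] EuclideanSpace ℝ (Fin n))
    (u : EuclideanSpace ℝ (Fin n) → EuclideanSpace ℝ (Fin m))
    (x : ℝ → EuclideanSpace ℝ (Fin n))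
    (hx : ∀ t, HasDerivAt x (f (x t) + g (x t) (u (x t))) t)
    (h : EuclideanSpace ℝ (Fin n) → ℝ) (hh : ContDiff ℝ 1 h)
    (k t₀ : ℝ)
    (hu : ∀ t ≥ t₀,
      fderiv ℝ h (x t) (f (x t) + g (x t) (u (x t))) ≥ -(1/k) * h (x t))
    (h0 : h (x t₀) ≥ 0) :
    ∀ t ≥ t₀, h (x t) ≥ 0 := by
  intro t ht
  have hderiv : ∀ s ≥ t₀, HasDerivAt (fun s => h (x s))
      (fderiv ℝ h (x s) (f (x s) + g (x s) (u (x s)))) s := fun s _ =>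
    (hh.differentiable one_ne_zero (x s)).hasFDerivAt.comp_hasDerivAt s (hx s)
  exact (mul_nonneg h0 (exp_pos _).le).trans (mul_exp_le_of_hasDerivAt_ge hderiv hu t ht)

/-- CBF safety along a closed-loop trajectory with linear class-K function. -/
theorem stmt_11 {n m : ℕ}
    (f : EuclideanSpace ℝ (Fin n) → EuclideanSpace ℝ (Fin n))
    (g : EuclideanSpace ℝ (Fin n) → EuclideanSpace ℝ (Fin m) →L[ℝ] EuclideanSpace ℝ (Fin n))
    (u : EuclideanSpace ℝ (Fin n) → EuclideanSpace ℝ (Fin m))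
    (x : ℝ → EuclideanSpace ℝ (Fin n))
    (hx : ∀ t, HasDerivAt x (f (x t) + g (x t) (u (x t))) t)
    (h : EuclideanSpace ℝ (Fin n) → ℝ) (hh : ContDiff ℝ 1 h)
    (k t₀ : ℝ) (hk : 0 < k)
    (hu : ∀ t ≥ t₀,
      fderiv ℝ h (x t) (f (x t) + g (x t) (u (x t))) ≥ -(1/k) * h (x t))
    (h0 : h (x t₀) ≥ 0) :
    ∀ t ≥ t₀, h (x t) ≥ 0 :=
  stmt_11_general f g u x hx h hh k t₀ hu h0
end

section
/- Fix k > 0, ε > 0. Let V : ℝ → ℝ be differentiable, and let b₁ > b₂ be two bounds with V(t₀) ≤ b₁ but V(t₀) > b₂. Suppose for all t ≥ t₀: V'(t) ≤ min((1/k)(b₁ - V(t)), -ε) whenever V(t) > b₂, and V'(t) ≤ (1/k)(b₂ - V(t)) whenever V(t) ≤ b₂. Then V(t) ≤ b₁ for all t ≥ t₀, and there exists T ≤ t₀ + (V(t₀) - b₂)/ε such that V(t) ≤ b₂ for all t ≥ T. -/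
/-- Barrier lemma: if `V s ≤ b` and `deriv V x ≤ 0` whenever `x ≥ s` and `V x > b`,
then `V t ≤ b` for all `t ≥ s`. -/
lemma barrier_aux (V : ℝ → ℝ) (hV : Differentiable ℝ V) (b s : ℝ)
    (hVs : V s ≤ b)
    (hd : ∀ x, s ≤ x → b < V x → deriv V x ≤ 0) :
    ∀ t ≥ s, V t ≤ b := by
  intro t hts
  by_contra hVt
  push_neg at hVt
  set A : Set ℝ := {x ∈ Set.Icc s t | V x ≤ b} with hA
  have hclosed : IsClosed A :=
    isClosed_Icc.inter (isClosed_le hV.continuous continuous_const)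
  have hne : A.Nonempty := ⟨s, ⟨le_refl s, hts⟩, hVs⟩
  have hbdd : BddAbove A := ⟨t, fun x hx => hx.1.2⟩
  set u := sSup A with hu
  have huA : u ∈ A := hclosed.csSup_mem hne hbdd
  have hut : u ≤ t := huA.1.2
  have hsu : s ≤ u := huA.1.1
  have hVu : V u ≤ b := huA.2
  have hmid : ∀ x ∈ Set.Ioo u t, deriv V x ≤ 0 := by
    intro x hx
    have hxgt : b < V x := by
      by_contra hle
      push_neg at hle
      have : x ∈ A := ⟨⟨hsu.trans hx.1.le, hx.2.le⟩, hle⟩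
      exact absurd (le_csSup hbdd this) (not_le.mpr hx.1)
    exact hd x (hsu.trans hx.1.le) hxgt
  have hanti : AntitoneOn V (Set.Icc u t) := by
    apply antitoneOn_of_deriv_nonpos (convex_Icc u t)
      hV.continuous.continuousOn (hV.differentiableOn)
    intro x hx
    rw [interior_Icc] at hx
    exact hmid x hx
  have : V t ≤ V u := hanti ⟨le_refl u, hut⟩ ⟨hut, le_refl t⟩ hut
  exact absurd (this.trans hVu) (not_le.mpr hVt)

/-- Two-level BCLF result: bound `b₁` is preserved, the tighter bound `b₂` is
reached in finite time and maintained thereafter. -/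
theorem stmt_12 (V : ℝ → ℝ) (hV : Differentiable ℝ V) (k ε b₁ b₂ t₀ : ℝ)
    (hk : 0 < k) (hε : 0 < ε) (hb : b₂ < b₁)
    (h0 : V t₀ ≤ b₁) (h0' : b₂ < V t₀)
    (hder₁ : ∀ t ≥ t₀, b₂ < V t → deriv V t ≤ min ((1/k) * (b₁ - V t)) (-ε))
    (hder₂ : ∀ t ≥ t₀, V t ≤ b₂ → deriv V t ≤ (1/k) * (b₂ - V t)) :
    (∀ t ≥ t₀, V t ≤ b₁) ∧
    ∃ T, T ≤ t₀ + (V t₀ - b₂) / ε ∧ ∀ t ≥ T, V t ≤ b₂ := by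
  constructor
  · -- b₁ is preserved
    apply barrier_aux V hV b₁ t₀ h0
    intro x hx hx1
    have := hder₁ x hx (hb.trans hx1)
    exact this.trans ((min_le_right _ _).trans (neg_nonpos.mpr hε.le))
  · -- reach b₂ in finite time
    set T₁ := t₀ + (V t₀ - b₂) / ε with hT₁
    have ht₀T₁ : t₀ ≤ T₁ := by
      have : 0 ≤ (V t₀ - b₂) / ε := div_nonneg (by linarith) hε.le
      rw [hT₁]; linarith
    -- there is a hitting time in [t₀, T₁]
    have hhit : ∃ s ∈ Set.Icc t₀ T₁, V s ≤ b₂ := by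
      by_contra hno
      push_neg at hno
      -- V + ε·id is antitone on [t₀, T₁]
      set g : ℝ → ℝ := fun x => V x + ε * x with hg
      have hgd : ∀ x, HasDerivAt g (deriv V x + ε) x := by
        intro x
        have h1 : HasDerivAt V (deriv V x) x := (hV x).hasDerivAt
        have h2 : HasDerivAt (fun y : ℝ => ε * y) ε x := by
          simpa using (hasDerivAt_id x).const_mul ε
        exact h1.add h2
      have hganti : AntitoneOn g (Set.Icc t₀ T₁) := by
        apply antitoneOn_of_deriv_nonpos (convex_Icc t₀ T₁)
        · exact (hV.continuous.add (continuous_const.mul continuous_id)).continuousOn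
        · intro x _
          exact (hgd x).differentiableAt.differentiableWithinAt
        · intro x hx
          rw [interior_Icc] at hx
          rw [(hgd x).deriv]
          have hxIcc : x ∈ Set.Icc t₀ T₁ := ⟨hx.1.le, hx.2.le⟩
          have hVx : b₂ < V x := hno x hxIcc
          have := (hder₁ x hx.1.le hVx).trans (min_le_right _ _)
          linarith
      have := hganti ⟨le_refl t₀, ht₀T₁⟩ ⟨ht₀T₁, le_refl T₁⟩ ht₀T₁
      have hVT₁ : b₂ < V T₁ := hno T₁ ⟨ht₀T₁, le_refl T₁⟩
      have hεT : ε * (T₁ - t₀) = V t₀ - b₂ := by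
        rw [hT₁]; field_simp; ring
      simp only [hg] at this
      nlinarith
    obtain ⟨s, hsIcc, hVs⟩ := hhit
    refine ⟨s, hsIcc.2, ?_⟩
    apply barrier_aux V hV b₂ s hVs
    intro x hx hx2
    have hxt₀ : t₀ ≤ x := hsIcc.1.trans hx
    have := hder₁ x hxt₀ hx2
    exact this.trans ((min_le_right _ _).trans (neg_nonpos.mpr hε.le))
end
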